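/- arXiv:1408.6781 — 3 statements merged into one kernel-verified Lean document; each statement's English description precedes it below -/
import Mathlib

section
/- Let f, j : [0,∞) → ℝ be differentiable and nonnegative with f' = -j, and suppose there is a ≥ 0 such that j(t) - 4·f(t) ≥ 4a·f(t)² for all t ≥ 0, and f(0) = f₀ > 0. Then f(t) ≤ f₀ / ((1+ε)·exp(4t) - ε) for all t ≥ 0, where ε := a·f₀. -/
theorem stmt_3 (f j : ℝ → ℝ) (a f₀ : ℝ) (ha : 0 ≤ a) (hf₀ : f 0 = f₀) (hf₀pos : 0 < f₀)
    (hfdiff : ∀ t ≥ (0 : ℝ), DifferentiableAt ℝ f t)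
    (hjdiff : ∀ t ≥ (0 : ℝ), DifferentiableAt ℝ j t)
    (hf0 : ∀ t ≥ (0 : ℝ), 0 ≤ f t) (hj0 : ∀ t ≥ (0 : ℝ), 0 ≤ j t)
    (hf' : ∀ t ≥ (0 : ℝ), deriv f t = - j t)
    (hlow : ∀ t ≥ (0 : ℝ), j t - 4 * f t ≥ 4 * a * (f t) ^ 2) :
    ∀ t ≥ (0 : ℝ), f t ≤ f₀ / ((1 + a * f₀) * Real.exp (4 * t) - a * f₀) := by
  intro t₁ ht₁
  have hεnn : 0 ≤ a * f₀ := mul_nonneg ha hf₀pos.le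
  set D : ℝ → ℝ := fun t => (1 + a * f₀) * Real.exp (4 * t) - a * f₀ with hDdef
  have hD1 : ∀ t ≥ (0 : ℝ), 1 ≤ D t := by
    intro t ht
    have h1 : 1 ≤ Real.exp (4 * t) := Real.one_le_exp (by linarith)
    show (1 : ℝ) ≤ (1 + a * f₀) * Real.exp (4 * t) - a * f₀
    nlinarith
  have hDderiv : ∀ t : ℝ, HasDerivAt D ((1 + a * f₀) * (Real.exp (4 * t) * 4)) t := by
    intro t
    have h1 : HasDerivAt (fun t : ℝ => 4 * t) 4 t := by
      simpa using (hasDerivAt_id t).const_mul 4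
    have h2 : HasDerivAt (fun t : ℝ => Real.exp (4 * t)) (Real.exp (4 * t) * 4) t :=
      (Real.hasDerivAt_exp (4 * t)).comp t h1
    exact (h2.const_mul (1 + a * f₀)).sub_const (a * f₀)
  set φ : ℝ → ℝ := fun t => f t * D t - f₀ with hφdef
  have hφderiv : ∀ t ≥ (0 : ℝ), HasDerivAt φ
      (-(j t) * D t + f t * ((1 + a * f₀) * (Real.exp (4 * t) * 4))) t := by
    intro t ht
    have hfd : HasDerivAt f (-(j t)) t := by
      have h := (hfdiff t ht).hasDerivAt
      rw [hf' t ht] at h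
      simpa using h
    exact (hfd.mul (hDderiv t)).sub_const f₀
  have hkey : ∀ t ≥ (0 : ℝ), 0 ≤ φ t → deriv φ t ≤ 0 := by
    intro t ht hφt
    rw [(hφderiv t ht).deriv]
    have hDt := hD1 t ht
    have hft := hf0 t ht
    have hl := hlow t ht
    have hφt' : 0 ≤ f t * D t - f₀ := hφt
    have hA : (4 * f t + 4 * a * f t ^ 2) * D t ≤ j t * D t :=
      mul_le_mul_of_nonneg_right (by linarith) (by linarith)
    have hB : 0 ≤ a * f t * (f t * D t - f₀) := mul_nonneg (mul_nonneg ha hft) hφt'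
    have hexp : (1 + a * f₀) * Real.exp (4 * t) = D t + a * f₀ := by
      show (1 + a * f₀) * Real.exp (4 * t) = ((1 + a * f₀) * Real.exp (4 * t) - a * f₀) + a * f₀
      ring
    nlinarith [hA, hB, hexp]
  have hφcont : ∀ t ≥ (0 : ℝ), ContinuousAt φ t := fun t ht =>
    ((hφderiv t ht).differentiableAt).continuousAt
  have hmain : φ t₁ ≤ 0 := by
    by_contra hc
    push_neg at hc
    set A : Set ℝ := {t | t ∈ Set.Icc (0 : ℝ) t₁ ∧ φ t ≤ 0} with hA
    have hφ0 : φ 0 = 0 := by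
      show f 0 * ((1 + a * f₀) * Real.exp (4 * 0) - a * f₀) - f₀ = 0
      simp [hf₀]
    have h0A : (0 : ℝ) ∈ A := ⟨⟨le_refl 0, ht₁⟩, le_of_eq hφ0⟩
    have hAne : A.Nonempty := ⟨0, h0A⟩
    have hAbdd : BddAbove A := ⟨t₁, fun x hx => hx.1.2⟩
    have hAclosed : IsClosed A := by
      have hcont : ContinuousOn φ (Set.Icc (0 : ℝ) t₁) := fun x hx =>
        (hφcont x hx.1).continuousWithinAt
      have : A = Set.Icc (0 : ℝ) t₁ ∩ φ ⁻¹' Set.Iic 0 := by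
        ext x; simp [hA, Set.mem_Icc, and_assoc]
      rw [this]
      exact hcont.preimage_isClosed_of_isClosed isClosed_Icc isClosed_Iic
    have hSA : sSup A ∈ A := hAclosed.csSup_mem hAne hAbdd
    set S := sSup A with hSdef
    have hS0 : 0 ≤ S := hSA.1.1
    have hSt₁ : S ≤ t₁ := hSA.1.2
    have hSlt : S < t₁ := lt_of_le_of_ne hSt₁ (by
      intro h; rw [h] at hSA; linarith [hSA.2])
    have hpos : ∀ x ∈ Set.Ioc S t₁, 0 < φ x := by
      intro x hx
      by_contra hxc
      push_neg at hxc
      have : x ∈ A := ⟨⟨le_trans hS0 hx.1.le, hx.2⟩, hxc⟩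
      exact absurd (le_csSup hAbdd this) (not_le.2 hx.1)
    have hanti : AntitoneOn φ (Set.Icc S t₁) := by
      apply antitoneOn_of_deriv_nonpos (convex_Icc S t₁)
      · exact fun x hx => (hφcont x (le_trans hS0 hx.1)).continuousWithinAt
      · intro x hx
        rw [interior_Icc] at hx
        exact (hφderiv x (le_trans hS0 hx.1.le)).differentiableAt.differentiableWithinAt
      · intro x hx
        rw [interior_Icc] at hx
        exact hkey x (le_trans hS0 hx.1.le) (hpos x ⟨hx.1, hx.2.le⟩).le
    have := hanti ⟨le_refl S, hSt₁⟩ ⟨hSt₁, le_refl t₁⟩ hSt₁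
    linarith [hSA.2]
  have hDpos : 0 < (1 + a * f₀) * Real.exp (4 * t₁) - a * f₀ := by
    have := hD1 t₁ ht₁; show (0:ℝ) < D t₁; linarith
  rw [le_div_iff₀ hDpos]
  have : f t₁ * D t₁ - f₀ ≤ 0 := hmain
  show f t₁ * D t₁ ≤ f₀
  linarith
end

section
/- Let σ : [0,∞) → (0,∞), f : [0,∞) → [0,∞) be differentiable, and let c > 0, β ∈ (0,1), ε > 0 with d/dt(σ(t)^β) = -c·f(t) and f(t) ≤ f(0)/((1+ε)·e^{4t} - ε) for all t ≥ 0. If σ(t) → σ_∞, then σ_∞^β ≥ σ(0)^β - c·f(0)·log(1+ε)/(4ε). -/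
open Filter Topology

theorem stmt_6 (f σ : ℝ → ℝ) (c β ε σ_inf : ℝ) (hc : 0 < c) (hβ : 0 < β) (hβ1 : β < 1)
    (hε : 0 < ε)
    (hσpos : ∀ t ≥ (0 : ℝ), 0 < σ t) (hf0 : ∀ t ≥ (0 : ℝ), 0 ≤ f t)
    (hfdiff : ∀ t ≥ (0 : ℝ), DifferentiableAt ℝ f t)
    (hσdiff : ∀ t ≥ (0 : ℝ), DifferentiableAt ℝ σ t)
    (hσ' : ∀ t ≥ (0 : ℝ), deriv (fun s => σ s ^ β) t = - c * f t)
    (hfdec : ∀ t ≥ (0 : ℝ), f t ≤ f 0 / ((1 + ε) * Real.exp (4 * t) - ε))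
    (hlim : Tendsto σ atTop (𝓝 σ_inf)) :
    σ_inf ^ β ≥ σ 0 ^ β - c * f 0 * Real.log (1 + ε) / (4 * ε) := by
  set F : ℝ → ℝ := fun t => Real.log (1 + ε - ε * Real.exp (-(4 * t))) / (4 * ε) with hFdef
  set h : ℝ → ℝ := fun t => σ t ^ β + c * f 0 * F t with hhdef
  have hden : ∀ t ≥ (0 : ℝ), 0 < (1 + ε) * Real.exp (4 * t) - ε := by
    intro t ht
    have h1 : (1 : ℝ) ≤ Real.exp (4 * t) := Real.one_le_exp (by positivity)
    nlinarith
  have harg : ∀ t ≥ (0 : ℝ), 0 < 1 + ε - ε * Real.exp (-(4 * t)) := by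
    intro t ht
    have h1 : Real.exp (-(4 * t)) ≤ 1 := Real.exp_le_one_iff.mpr (by linarith)
    nlinarith [Real.exp_pos (-(4 * t))]
  -- h has derivative -c f t + c f 0 / den at every t ≥ 0
  have hderiv : ∀ t ≥ (0 : ℝ), HasDerivAt h
      (-c * f t + c * f 0 * (1 / ((1 + ε) * Real.exp (4 * t) - ε))) t := by
    intro t ht
    have hgd : DifferentiableAt ℝ (fun s => σ s ^ β) t :=
      (hσdiff t ht).rpow_const (Or.inl (hσpos t ht).ne')
    have hg : HasDerivAt (fun s => σ s ^ β) (-c * f t) t := by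
      have := hgd.hasDerivAt
      rwa [hσ' t ht] at this
    have h0 : HasDerivAt (fun t : ℝ => -(4 * t)) (-4) t := by
      exact ((hasDerivAt_id t).const_mul (4 : ℝ)).neg.congr_deriv (by norm_num)
    have h1 : HasDerivAt (fun t : ℝ => Real.exp (-(4 * t)))
        (Real.exp (-(4 * t)) * -4) t := h0.exp
    have h2 : HasDerivAt (fun t : ℝ => 1 + ε - ε * Real.exp (-(4 * t)))
        (-(ε * (Real.exp (-(4 * t)) * -4))) t := (h1.const_mul ε).const_sub (1 + ε)
    have h3 := (h2.log (harg t ht).ne').div_const (4 * ε)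
    have hE : Real.exp (4 * t) ≠ 0 := (Real.exp_pos _).ne'
    have hEq : -(ε * (Real.exp (-(4 * t)) * -4)) / (1 + ε - ε * Real.exp (-(4 * t))) / (4 * ε)
        = 1 / ((1 + ε) * Real.exp (4 * t) - ε) := by
      rw [Real.exp_neg]
      have ha : 1 + ε - ε * (Real.exp (4 * t))⁻¹ ≠ 0 := by
        rw [← Real.exp_neg]; exact (harg t ht).ne'
      have hd := (hden t ht).ne'
      field_simp
    rw [hEq] at h3
    exact hg.add ((h3.const_mul (c * f 0)))
  have hmono : MonotoneOn h (Set.Ici (0 : ℝ)) := by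
    apply monotoneOn_of_deriv_nonneg (convex_Ici 0)
    · exact fun t ht => (hderiv t ht).differentiableAt.continuousAt.continuousWithinAt
    · intro t ht
      rw [interior_Ici] at ht
      exact (hderiv t (le_of_lt ht)).differentiableAt.differentiableWithinAt
    · intro t ht
      rw [interior_Ici] at ht
      rw [(hderiv t (le_of_lt ht)).deriv]
      have hfd := hfdec t (le_of_lt ht)
      have hdp := hden t (le_of_lt ht)
      have : f t * ((1 + ε) * Real.exp (4 * t) - ε) ≤ f 0 := by
        rw [div_eq_inv_mul] at hfd
        calc f t * ((1 + ε) * Real.exp (4 * t) - ε)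
            ≤ (((1 + ε) * Real.exp (4 * t) - ε)⁻¹ * f 0) * ((1 + ε) * Real.exp (4 * t) - ε) := by
              apply mul_le_mul_of_nonneg_right hfd hdp.le
          _ = f 0 := by field_simp
      have h4 : f t ≤ f 0 * (1 / ((1 + ε) * Real.exp (4 * t) - ε)) := by
        rw [mul_one_div, le_div_iff₀ hdp]; linarith
      nlinarith [mul_le_mul_of_nonneg_left h4 hc.le]
  have hF0 : F 0 = 0 := by simp [hFdef]
  have hFle : ∀ t ≥ (0 : ℝ), F t ≤ Real.log (1 + ε) / (4 * ε) := by
    intro t ht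
    have h1 : 1 + ε - ε * Real.exp (-(4 * t)) ≤ 1 + ε := by
      nlinarith [Real.exp_pos (-(4 * t))]
    have := Real.log_le_log (harg t ht) h1
    exact div_le_div_of_nonneg_right this (by positivity) |>.trans_eq rfl
  have hcf0 : 0 ≤ c * f 0 := mul_nonneg hc.le (hf0 0 le_rfl)
  have key : ∀ t ≥ (0 : ℝ), σ t ^ β ≥ σ 0 ^ β - c * f 0 * Real.log (1 + ε) / (4 * ε) := by
    intro t ht
    have := hmono (Set.self_mem_Ici) (Set.mem_Ici.mpr ht) ht
    simp only [hhdef, hF0, mul_zero, add_zero] at this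
    have h2 : c * f 0 * F t ≤ c * f 0 * (Real.log (1 + ε) / (4 * ε)) :=
      mul_le_mul_of_nonneg_left (hFle t ht) hcf0
    have h3 : c * f 0 * Real.log (1 + ε) / (4 * ε) = c * f 0 * (Real.log (1 + ε) / (4 * ε)) := by
      ring
    linarith
  have hσinf_nonneg : (0 : ℝ) ≤ σ_inf :=
    ge_of_tendsto hlim (eventually_atTop.mpr ⟨0, fun t ht => (hσpos t ht).le⟩)
  have hcont : ContinuousAt (fun x : ℝ => x ^ β) σ_inf :=
    Real.continuousAt_rpow_const σ_inf β (Or.inr hβ.le)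
  have hlim2 : Tendsto (fun t => σ t ^ β) atTop (𝓝 (σ_inf ^ β)) :=
    (hcont.tendsto.comp hlim)
  exact ge_of_tendsto hlim2 (eventually_atTop.mpr ⟨0, fun t ht => key t ht⟩)
end

section
/- Let g : [0,∞) → ℝ be nonnegative, continuous, with g(s) = O(s^{-2α}) as s → ∞ for some α > 1/2, and define, for σ₀ > 0, α > 0, ζ > 0, S(τ) := (σ₀^{1/(2α)} + τ/α - (ζ/α)·∫₀^τ g(s) ds)^{2α}. Assume σ₀^{1/(2α)} > (ζ/α)·∫₀^∞ g(s) ds. Then with δ := ζ·∫₀^∞ g(s) ds (a finite nonnegative number), S(τ) = (σ₀^{1/(2α)} + (τ - δ)/α)^{2α} + o(τ^{2α-1}) as τ → ∞, and δ = 0 if and only if g ≡ 0. -/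
open Filter Topology Asymptotics MeasureTheory

lemma mvt_rpow {x y p : ℝ} (hy : 0 < y) (hxy : y ≤ x) (hp : 1 ≤ p) :
    x ^ p - y ^ p ≤ p * x ^ (p - 1) * (x - y) := by
  rcases eq_or_lt_of_le hxy with h | h
  · simp [h]
  · obtain ⟨c, hc, hc'⟩ := exists_hasDerivAt_eq_slope (fun z => z ^ p)
      (fun z => p * z ^ (p - 1)) h
      (fun z _ => (Real.hasDerivAt_rpow_const (Or.inr hp)).continuousAt.continuousWithinAt)
      (fun z _ => Real.hasDerivAt_rpow_const (Or.inr hp))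
    have hcx : c ^ (p - 1) ≤ x ^ (p - 1) :=
      Real.rpow_le_rpow (le_of_lt (hy.trans hc.1)) (le_of_lt hc.2) (by linarith)
    rw [eq_div_iff (sub_ne_zero.mpr h.ne')] at hc'
    calc x ^ p - y ^ p = p * c ^ (p - 1) * (x - y) := hc'.symm
      _ ≤ p * x ^ (p - 1) * (x - y) :=
        mul_le_mul_of_nonneg_right (mul_le_mul_of_nonneg_left hcx (by linarith)) (by linarith)

theorem stmt_14 (g : ℝ → ℝ) (α σ₀ ζ : ℝ) (hα : 1 / 2 < α) (hσ₀ : 0 < σ₀) (hζ : 0 < ζ)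
    (hg0 : ∀ s ≥ (0 : ℝ), 0 ≤ g s) (hgcont : ContinuousOn g (Set.Ici 0))
    (hgO : (fun s => g s) =O[atTop] fun s : ℝ => s ^ (-(2 * α)))
    (hint : IntegrableOn g (Set.Ici 0))
    (hbound : (ζ / α) * ∫ s in Set.Ici (0 : ℝ), g s < σ₀ ^ (1 / (2 * α))) :
    0 ≤ ζ * ∫ s in Set.Ici (0 : ℝ), g s ∧
    ((fun τ : ℝ =>
        (σ₀ ^ (1 / (2 * α)) + τ / α - (ζ / α) * ∫ s in (0 : ℝ)..τ, g s) ^ (2 * α) -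
          (σ₀ ^ (1 / (2 * α)) + (τ - ζ * ∫ s in Set.Ici (0 : ℝ), g s) / α) ^ (2 * α))
      =o[atTop] fun τ : ℝ => τ ^ (2 * α - 1)) ∧
    (ζ * ∫ s in Set.Ici (0 : ℝ), g s = 0 ↔ ∀ s ≥ (0 : ℝ), g s = 0) := by
  have hα0 : (0 : ℝ) < α := by linarith
  set I := ∫ s in Set.Ici (0 : ℝ), g s with hIdef
  set A := σ₀ ^ (1 / (2 * α)) with hAdef
  have hA : 0 < A := Real.rpow_pos_of_pos hσ₀ _
  have hgae : 0 ≤ᵐ[volume.restrict (Set.Ici (0 : ℝ))] g :=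
    (ae_restrict_mem measurableSet_Ici).mono hg0
  have hI0 : 0 ≤ I := setIntegral_nonneg measurableSet_Ici hg0
  have hτle : ∀ τ : ℝ, 0 ≤ τ → ∫ s in (0 : ℝ)..τ, g s ≤ I := by
    intro τ hτ
    rw [intervalIntegral.integral_of_le hτ]
    exact setIntegral_mono_set hint hgae
      (HasSubset.Subset.eventuallyLE (fun x hx => le_of_lt hx.1))
  have hτ0 : ∀ τ : ℝ, 0 ≤ τ → 0 ≤ ∫ s in (0 : ℝ)..τ, g s := fun τ hτ =>
    intervalIntegral.integral_nonneg hτ (fun x hx => hg0 x hx.1)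
  refine ⟨mul_nonneg hζ.le hI0, ?_, ?_⟩
  · -- little-o part
    have hp1 : (1 : ℝ) ≤ 2 * α := by linarith
    have hq0 : (0 : ℝ) ≤ 2 * α - 1 := by linarith
    have hK : 0 < 2 * α * (A + 1 / α) ^ (2 * α - 1) := by
      have : (0 : ℝ) < A + 1 / α := by positivity
      positivity
    set K := 2 * α * (A + 1 / α) ^ (2 * α - 1) with hKdef
    have hIoi : (∫ s in Set.Ioi (0 : ℝ), g s) = I :=
      (MeasureTheory.integral_Ici_eq_integral_Ioi).symm
    have htend : Tendsto (fun τ : ℝ => (ζ / α) * (I - ∫ s in (0 : ℝ)..τ, g s)) atTop (𝓝 0) := by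
      have h1 := MeasureTheory.intervalIntegral_tendsto_integral_Ioi 0
        (hint.mono_set Set.Ioi_subset_Ici_self) (tendsto_id (α := ℝ))
      rw [hIoi] at h1
      have h2 := (tendsto_const_nhds (x := I) (f := atTop)).sub h1
      have h3 := h2.const_mul (ζ / α)
      simpa using h3
    rw [Asymptotics.isLittleO_iff]
    intro c hc
    have hcK : (0 : ℝ) < c / K := by positivity
    filter_upwards [eventually_ge_atTop (1 : ℝ),
      htend.eventually (gt_mem_nhds hcK)] with τ hτ1 hτε
    have hτ0' : (0 : ℝ) ≤ τ := by linarith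
    set J := ∫ s in (0 : ℝ)..τ, g s with hJdef
    have hJ0 : 0 ≤ J := hτ0 τ hτ0'
    have hJI : J ≤ I := hτle τ hτ0'
    set b := A + τ / α - ζ / α * J with hbdef
    set a := A + (τ - ζ * I) / α with hadef
    clear_value J b a
    have hab : b - a = ζ / α * (I - J) := by rw [hbdef, hadef]; ring
    have ha : 0 < a := by
      have h1 : a = A - ζ / α * I + τ / α := by rw [hadef]; ring
      have h2 : 0 ≤ τ / α := by positivity
      rw [h1]; linarith
    have hba : a ≤ b := by
      have h5 : 0 ≤ ζ / α * (I - J) := by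
        apply mul_nonneg (by positivity); linarith
      linarith [hab, h5]
    have hbub : b ≤ A + τ / α := by
      have : 0 ≤ ζ / α * J := mul_nonneg (by positivity) hJ0
      rw [hbdef]; linarith
    have hF0 : 0 ≤ b ^ (2 * α) - a ^ (2 * α) :=
      sub_nonneg.mpr (Real.rpow_le_rpow ha.le hba (by linarith))
    have hmvt : b ^ (2 * α) - a ^ (2 * α) ≤ 2 * α * b ^ (2 * α - 1) * (b - a) :=
      mvt_rpow ha hba hp1
    have hb1 : b ^ (2 * α - 1) ≤ (A + τ / α) ^ (2 * α - 1) :=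
      Real.rpow_le_rpow (ha.le.trans hba) hbub hq0
    have hb2 : (A + τ / α) ^ (2 * α - 1) ≤ (A + 1 / α) ^ (2 * α - 1) * τ ^ (2 * α - 1) := by
      rw [← Real.mul_rpow (by positivity) (by linarith)]
      apply Real.rpow_le_rpow (by positivity) _ hq0
      have : A + τ / α ≤ (A + 1 / α) * τ := by
        have h3 : (A + 1 / α) * τ - (A + τ / α) = A * (τ - 1) := by ring
        nlinarith
      exact this
    have hτp : 0 ≤ τ ^ (2 * α - 1) := Real.rpow_nonneg hτ0' _
    have hεb : b - a < c / K := by rw [hab]; exact hτε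
    have key : b ^ (2 * α) - a ^ (2 * α) ≤ c * τ ^ (2 * α - 1) := by
      have s1 : 2 * α * b ^ (2 * α - 1) * (b - a)
          ≤ 2 * α * ((A + 1 / α) ^ (2 * α - 1) * τ ^ (2 * α - 1)) * (b - a) := by
        apply mul_le_mul_of_nonneg_right _ (by linarith)
        apply mul_le_mul_of_nonneg_left (hb1.trans hb2) (by linarith)
      have s2 : 2 * α * ((A + 1 / α) ^ (2 * α - 1) * τ ^ (2 * α - 1)) * (b - a)
          = K * τ ^ (2 * α - 1) * (b - a) := by rw [hKdef]; ring
      have s3 : K * τ ^ (2 * α - 1) * (b - a) ≤ K * τ ^ (2 * α - 1) * (c / K) :=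
        mul_le_mul_of_nonneg_left hεb.le (by positivity)
      have s4 : K * τ ^ (2 * α - 1) * (c / K) = c * τ ^ (2 * α - 1) := by
        field_simp
      linarith [hmvt]
    rw [Real.norm_eq_abs, Real.norm_eq_abs, abs_of_nonneg hF0, abs_of_nonneg hτp]
    exact key
  · constructor
    · intro h s hs
      have hIz : I = 0 := by
        rcases mul_eq_zero.mp h with h' | h'
        · exact absurd h' hζ.ne'
        · exact h'
      by_contra hgs
      have hpos : 0 < g s := lt_of_le_of_ne (hg0 s hs) (Ne.symm hgs)
      have hev : ∀ᶠ x in 𝓝[Set.Ici 0] s, 0 < g x :=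
        (hgcont s hs).eventually (eventually_gt_nhds hpos)
      obtain ⟨ε, hε, hsub⟩ := Metric.mem_nhdsWithin_iff.mp hev
      set b := s + ε / 2 with hb
      have hsb : s < b := by rw [hb]; linarith
      have hpos' : ∀ x ∈ Set.Ioo s b, 0 < g x := by
        intro x hx
        apply hsub
        constructor
        · rw [Metric.mem_ball, Real.dist_eq, abs_of_nonneg (by linarith [hx.1])]
          have := hx.2; rw [hb] at this; linarith
        · exact le_trans hs hx.1.le
      have hii : IntervalIntegrable g volume s b := by
        apply IntegrableOn.intervalIntegrable
        apply hint.mono_set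
        rw [Set.uIcc_of_le hsb.le]
        exact fun x hx => le_trans hs hx.1
      have hIpos : 0 < ∫ x in s..b, g x :=
        intervalIntegral.intervalIntegral_pos_of_pos_on hii hpos' hsb
      have hle : ∫ x in s..b, g x ≤ I := by
        rw [intervalIntegral.integral_of_le hsb.le]
        exact setIntegral_mono_set hint hgae
          (HasSubset.Subset.eventuallyLE (fun x hx => le_trans hs hx.1.le))
      rw [hIz] at hle
      linarith
    · intro h
      have hIz : I = 0 := by
        rw [hIdef, setIntegral_congr_fun measurableSet_Ici
          (fun x hx => h x hx : Set.EqOn g (fun _ => 0) (Set.Ici 0))]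
        simp
      rw [hIz, mul_zero]
end
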